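/- (L² stability, Theorem 1.3 of the paper.) Let u and v be classical solutions of the non-local logistic equation with initial data g_u and g_v respectively, and suppose there is a constant C > 0 such that for all t ≥ 0: 0 ≤ u(t,x) ≤ C and 0 ≤ v(t,x) ≤ C on D, ∫_D u(t,x)² dx ≤ C², ∫_D |∇u(t,x)|² dx ≤ C² and ∫_D |∇v(t,x)|² dx ≤ C², and λ_v(t) ≤ C. Assume in addition that, writing w(t,x) = u(t,x) − v(t,x), the map t ↦ ∫_D w(t,x)² dx is differentiable with derivative 2∫_D w(t,x)·∂_t w(t,x) dx, and that ∫_D w(t,x)·Δw(t,x) dx = −∫_D |∇w(t,x)|² dx for every t ≥ 0 (integration by parts, valid since w(t,·) vanishes on ∂D). Then there exists a constant C₁ ≥ 0, depending only on C, M, p and |D|, such that ∫_D (u(t,x) − v(t,x))² dx ≤ (∫_D (g_u(x) − g_v(x))² dx) · exp(C₁·t) for all t ≥ 0. -/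

import Mathlib

open MeasureTheory Real Set

noncomputable section

/-- The Laplacian of `f`, as the sum of the pure second derivatives in the coordinate
directions of `EuclideanSpace ℝ (Fin n)`. -/
def lap {n : ℕ} (f : EuclideanSpace ℝ (Fin n) → ℝ) (x : EuclideanSpace ℝ (Fin n)) : ℝ :=
  ∑ i : Fin n, fderiv ℝ (fun y => fderiv ℝ f y (EuclideanSpace.single i 1)) x
    (EuclideanSpace.single i 1)

/-- The non-local term `λ(t) = ∫_D (|∇u|² + a (u^{p+1} − u²)) dx`. -/
def lam {n : ℕ} (D : Set (EuclideanSpace ℝ (Fin n))) (a : EuclideanSpace ℝ (Fin n) → ℝ)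
    (p : ℝ) (u : ℝ → EuclideanSpace ℝ (Fin n) → ℝ) (t : ℝ) : ℝ :=
  ∫ x in D, (‖gradient (u t) x‖ ^ 2 + a x * ((u t x) ^ (p + 1) - (u t x) ^ 2))

/-- A classical solution of the non-local logistic equation
`∂ₜu = Δu + λ(t)u + a(u − uᵖ)` on `D` with initial data `g`. -/
structure IsClassicalSolution {n : ℕ} (D : Set (EuclideanSpace ℝ (Fin n)))
    (a : EuclideanSpace ℝ (Fin n) → ℝ) (p : ℝ)
    (g : EuclideanSpace ℝ (Fin n) → ℝ) (u : ℝ → EuclideanSpace ℝ (Fin n) → ℝ) : Prop where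
  init : ∀ x ∈ D, u 0 x = g x
  nonneg : ∀ t, 0 ≤ t → ∀ x ∈ D, 0 ≤ u t x
  space_reg : ∀ t, 0 ≤ t → ContDiffOn ℝ 2 (u t) D
  time_diff : ∀ x ∈ D, Differentiable ℝ fun s => u s x
  lam_integrable : ∀ t, 0 ≤ t → IntegrableOn
    (fun x => ‖gradient (u t) x‖ ^ 2 + a x * ((u t x) ^ (p + 1) - (u t x) ^ 2)) D volume
  pde : ∀ t, 0 ≤ t → ∀ x ∈ D,
    deriv (fun s => u s x) t =
      lap (u t) x + lam D a p u t * u t x + a x * (u t x - (u t x) ^ p)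

/-!
Write `w = u - v` and `W(t) = ∫_D w²`. By the equation and integration by parts,
`W'/2 = -∫_D |∇w|² + ∫_D w (λ_u u - λ_v v) + ∫_D a w (w - (uᵖ - vᵖ))`.
Since `s ↦ sᵖ` is increasing, the last term is at most `M W`. Splitting
`λ_u u - λ_v v = λ_v w + (λ_u - λ_v) u` leaves the non-local difference, which is Lipschitz in `w`:
by Cauchy–Schwarz, `|λ_u - λ_v| ≤ 2C ‖∇w‖₂ + M ((p+1) Cᵖ + 2C) ‖w‖₁` and `‖w‖₁ ≤ |D|^½ W^½`.
Young's inequality absorbs the gradient part into the dissipation `-∫_D |∇w|²`, so that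
`W' ≤ 2K W` with `K` depending only on `C`, `M`, `p`, `|D|`, and Grönwall's inequality concludes.
-/

open Filter Topology

theorem abs_rpow_sub_rpow_le {q c x y : ℝ} (hq : 1 ≤ q) (hx : x ∈ Icc 0 c) (hy : y ∈ Icc 0 c) :
    |x ^ q - y ^ q| ≤ q * c ^ (q - 1) * |x - y| := by
  have hderiv : ∀ r ∈ Icc 0 c,
      HasDerivWithinAt (fun r : ℝ => r ^ q) (q * r ^ (q - 1)) (Icc 0 c) r :=
    fun r _ => (Real.hasDerivAt_rpow_const (Or.inr hq)).hasDerivWithinAt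
  have hbound : ∀ r ∈ Icc 0 c, ‖q * r ^ (q - 1)‖ ≤ q * c ^ (q - 1) := fun r hr => by
    rw [Real.norm_of_nonneg (mul_nonneg (by linarith) (Real.rpow_nonneg hr.1 _))]
    exact mul_le_mul_of_nonneg_left (Real.rpow_le_rpow hr.1 hr.2 (by linarith)) (by linarith)
  simpa using (convex_Icc 0 c).norm_image_sub_le_of_norm_hasDerivWithin_le hderiv hbound hy hx

theorem sub_mul_rpow_sub_rpow_nonneg {p x y : ℝ} (hp : 0 ≤ p) (hx : 0 ≤ x) (hy : 0 ≤ y) :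
    0 ≤ (x - y) * (x ^ p - y ^ p) := by
  rcases le_total x y with hxy | hxy
  · exact mul_nonneg_of_nonpos_of_nonpos (by linarith)
      (by linarith [Real.rpow_le_rpow hx hxy hp])
  · exact mul_nonneg (by linarith) (by linarith [Real.rpow_le_rpow hy hxy hp])

theorem abs_reaction_sub_reaction_le {α M C p x y : ℝ} (hα : 0 ≤ α ∧ α ≤ M) (hp : 0 ≤ p)
    (hx : x ∈ Icc 0 C) (hy : y ∈ Icc 0 C) :
    |α * (x ^ (p + 1) - x ^ 2) - α * (y ^ (p + 1) - y ^ 2)| ≤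
      M * ((p + 1) * C ^ p + 2 * C) * |x - y| := by
  have hpow : |x ^ (p + 1) - y ^ (p + 1)| ≤ (p + 1) * C ^ p * |x - y| := by
    simpa using abs_rpow_sub_rpow_le (q := p + 1) (by linarith) hx hy
  have hsq : |x ^ 2 - y ^ 2| ≤ 2 * C * |x - y| := by
    rw [sq_sub_sq, abs_mul, abs_of_nonneg (by linarith [hx.1, hy.1])]
    gcongr
    linarith [hx.2, hy.2]
  calc |α * (x ^ (p + 1) - x ^ 2) - α * (y ^ (p + 1) - y ^ 2)|
      = α * |(x ^ (p + 1) - y ^ (p + 1)) - (x ^ 2 - y ^ 2)| := by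
        rw [← mul_sub, abs_mul, abs_of_nonneg hα.1, sub_sub_sub_comm]
    _ ≤ M * ((p + 1) * C ^ p * |x - y| + 2 * C * |x - y|) :=
        mul_le_mul hα.2 ((abs_sub _ _).trans (add_le_add hpow hsq)) (abs_nonneg _)
          (hα.1.trans hα.2)
    _ = M * ((p + 1) * C ^ p + 2 * C) * |x - y| := by ring

section Integrals

variable {α : Type*} [MeasurableSpace α] {μ : Measure α}

theorem integral_mul_le_sqrt_mul_sqrt {f g : α → ℝ} (hf₀ : 0 ≤ᵐ[μ] f) (hg₀ : 0 ≤ᵐ[μ] g)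
    (hf : MemLp f 2 μ) (hg : MemLp g 2 μ) :
    ∫ x, f x * g x ∂μ ≤ √(∫ x, f x ^ 2 ∂μ) * √(∫ x, g x ^ 2 ∂μ) := by
  simpa [Real.sqrt_eq_rpow] using integral_mul_le_Lp_mul_Lq_of_nonneg
    Real.HolderConjugate.two_two hf₀ hg₀ (by simpa using hf) (by simpa using hg)

theorem setIntegral_abs_le_sqrt_mul_sqrt {s : Set α} (hs : μ s ≠ ⊤) {f : α → ℝ}
    (hf : MemLp f 2 (μ.restrict s)) :
    ∫ x in s, |f x| ∂μ ≤ √(μ.real s) * √(∫ x in s, f x ^ 2 ∂μ) := by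
  have : IsFiniteMeasure (μ.restrict s) := isFiniteMeasure_restrict.2 hs
  simpa using integral_mul_le_sqrt_mul_sqrt (f := fun _ => (1 : ℝ)) (g := fun x => |f x|)
    (ae_of_all _ fun _ => zero_le_one) (ae_of_all _ fun _ => abs_nonneg _) (memLp_const 1) hf.abs

theorem ContinuousOn.integrableOn_of_abs_le [TopologicalSpace α] [OpensMeasurableSpace α]
    {s : Set α} {f : α → ℝ} (hf : ContinuousOn f s) (hs : MeasurableSet s) (hμs : μ s ≠ ⊤)
    {c : ℝ} (hc : ∀ x ∈ s, |f x| ≤ c) : IntegrableOn f s μ :=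
  ⟨hf.aestronglyMeasurable hs, .restrict_of_bounded c hμs.lt_top (ae_restrict_of_forall_mem hs hc)⟩

end Integrals

section Gradient

variable {E : Type*} [NormedAddCommGroup E] [InnerProductSpace ℝ E] [CompleteSpace E]

theorem gradient_fun_sub {f g : E → ℝ} {x : E} (hf : DifferentiableAt ℝ f x)
    (hg : DifferentiableAt ℝ g x) :
    gradient (fun y => f y - g y) x = gradient f x - gradient g x := by
  simp only [gradient, fderiv_fun_sub hf hg, map_sub]

theorem ContDiffOn.continuousOn_gradient {f : E → ℝ} {s : Set E} (hf : ContDiffOn ℝ 1 f s)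
    (hs : IsOpen s) : ContinuousOn (gradient f) s :=
  (InnerProductSpace.toDual ℝ E).symm.continuous.comp_continuousOn
    (hf.continuousOn_fderiv_of_isOpen hs le_rfl)

theorem ContDiffOn.gradient_fun_sub {f g : E → ℝ} {s : Set E} {x : E} (hf : ContDiffOn ℝ 1 f s)
    (hg : ContDiffOn ℝ 1 g s) (hs : IsOpen s) (hx : x ∈ s) :
    gradient (fun y => f y - g y) x = gradient f x - gradient g x :=
  _root_.gradient_fun_sub ((hf.differentiableOn one_ne_zero).differentiableAt (hs.mem_nhds hx))
    ((hg.differentiableOn one_ne_zero).differentiableAt (hs.mem_nhds hx))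

variable [MeasurableSpace E] [BorelSpace E] [SecondCountableTopology E]

theorem ContDiffOn.memLp_gradient {μ : Measure E} {f : E → ℝ} {s : Set E} (hf : ContDiffOn ℝ 1 f s)
    (hs : IsOpen s) (hf2 : IntegrableOn (fun x => ‖gradient f x‖ ^ 2) s μ) :
    MemLp (gradient f) 2 (μ.restrict s) :=
  (memLp_two_iff_integrable_sq_norm
    ((hf.continuousOn_gradient hs).aestronglyMeasurable hs.measurableSet)).2 hf2

theorem ContDiffOn.memLp_gradient_sub {μ : Measure E} {f g : E → ℝ} {s : Set E}
    (hf : ContDiffOn ℝ 1 f s) (hg : ContDiffOn ℝ 1 g s) (hs : IsOpen s)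
    (hf2 : IntegrableOn (fun x => ‖gradient f x‖ ^ 2) s μ)
    (hg2 : IntegrableOn (fun x => ‖gradient g x‖ ^ 2) s μ) :
    MemLp (gradient (fun y => f y - g y)) 2 (μ.restrict s) :=
  ((hf.memLp_gradient hs hf2).sub (hg.memLp_gradient hs hg2)).ae_eq
    (ae_restrict_of_forall_mem hs.measurableSet fun _ hx => (hf.gradient_fun_sub hg hs hx).symm)

theorem abs_setIntegral_sq_norm_gradient_sub_le {μ : Measure E} {f g : E → ℝ} {s : Set E}
    (hs : IsOpen s) (hf : ContDiffOn ℝ 1 f s) (hg : ContDiffOn ℝ 1 g s)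
    (hf2 : IntegrableOn (fun x => ‖gradient f x‖ ^ 2) s μ)
    (hg2 : IntegrableOn (fun x => ‖gradient g x‖ ^ 2) s μ) :
    |∫ x in s, ‖gradient f x‖ ^ 2 ∂μ - ∫ x in s, ‖gradient g x‖ ^ 2 ∂μ| ≤
      (√(∫ x in s, ‖gradient f x‖ ^ 2 ∂μ) + √(∫ x in s, ‖gradient g x‖ ^ 2 ∂μ)) *
        √(∫ x in s, ‖gradient (fun y => f y - g y) x‖ ^ 2 ∂μ) := by
  have hF := (hf.memLp_gradient hs hf2).norm
  have hG := (hg.memLp_gradient hs hg2).norm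
  have hH := (hf.memLp_gradient_sub hg hs hf2 hg2).norm
  have hpt : ∀ x ∈ s, ‖‖gradient f x‖ ^ 2 - ‖gradient g x‖ ^ 2‖ ≤
      ‖gradient f x‖ * ‖gradient (fun y => f y - g y) x‖ +
        ‖gradient g x‖ * ‖gradient (fun y => f y - g y) x‖ := fun x hx => by
    rw [Real.norm_eq_abs, sq_sub_sq, abs_mul, abs_of_nonneg (by positivity),
      hf.gradient_fun_sub hg hs hx]
    nlinarith [abs_norm_sub_norm_le (gradient f x) (gradient g x),
      norm_nonneg (gradient f x), norm_nonneg (gradient g x)]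
  set h := gradient (fun y => f y - g y)
  calc |∫ x in s, ‖gradient f x‖ ^ 2 ∂μ - ∫ x in s, ‖gradient g x‖ ^ 2 ∂μ|
      = ‖∫ x in s, (‖gradient f x‖ ^ 2 - ‖gradient g x‖ ^ 2) ∂μ‖ := by
        rw [integral_sub hf2 hg2, Real.norm_eq_abs]
    _ ≤ ∫ x in s, (‖gradient f x‖ * ‖h x‖ + ‖gradient g x‖ * ‖h x‖) ∂μ :=
        norm_integral_le_of_norm_le ((hF.integrable_mul hH).add (hG.integrable_mul hH))
          (ae_restrict_of_forall_mem hs.measurableSet hpt)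
    _ = ∫ x in s, ‖gradient f x‖ * ‖h x‖ ∂μ + ∫ x in s, ‖gradient g x‖ * ‖h x‖ ∂μ :=
        integral_add (hF.integrable_mul hH) (hG.integrable_mul hH)
    _ ≤ √(∫ x in s, ‖gradient f x‖ ^ 2 ∂μ) * √(∫ x in s, ‖h x‖ ^ 2 ∂μ) +
          √(∫ x in s, ‖gradient g x‖ ^ 2 ∂μ) * √(∫ x in s, ‖h x‖ ^ 2 ∂μ) := by
        gcongr <;> exact integral_mul_le_sqrt_mul_sqrt (ae_of_all _ fun _ => norm_nonneg _)
          (ae_of_all _ fun _ => norm_nonneg _) ‹_› hH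
    _ = _ := by ring

end Gradient

section Laplacian

variable {n : ℕ}

theorem lap_fun_sub {f g : EuclideanSpace ℝ (Fin n) → ℝ} {x : EuclideanSpace ℝ (Fin n)}
    (hf : ContDiffAt ℝ 2 f x) (hg : ContDiffAt ℝ 2 g x) :
    lap (fun y => f y - g y) x = lap f x - lap g x := by
  have hfderiv : fderiv ℝ (fun y => f y - g y) =ᶠ[𝓝 x] fderiv ℝ f - fderiv ℝ g := by
    filter_upwards [hf.eventually (by simp), hg.eventually (by simp)] with y hfy hgy
    exact fderiv_fun_sub (hfy.differentiableAt (by simp)) (hgy.differentiableAt (by simp))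
  have hdiff : ∀ {h : EuclideanSpace ℝ (Fin n) → ℝ}, ContDiffAt ℝ 2 h x →
      DifferentiableAt ℝ (fderiv ℝ h) x := fun hh =>
    (hh.fderiv_right (m := 1) (by norm_num)).differentiableAt one_ne_zero
  simp only [lap, ← Finset.sum_sub_distrib]
  refine Finset.sum_congr rfl fun i _ => ?_
  set e : EuclideanSpace ℝ (Fin n) := EuclideanSpace.single i 1
  have hcoord : (fun y => fderiv ℝ (fun y => f y - g y) y e) =ᶠ[𝓝 x]
      fun y => fderiv ℝ f y e - fderiv ℝ g y e := hfderiv.mono fun y hy => by simp [hy]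
  rw [hcoord.fderiv_eq, fderiv_fun_sub ((hdiff hf).clm_apply (differentiableAt_const e))
    ((hdiff hg).clm_apply (differentiableAt_const e))]
  rfl

theorem lap_eq_zero_of_fderiv_eventuallyEq_zero {f : EuclideanSpace ℝ (Fin n) → ℝ}
    {x : EuclideanSpace ℝ (Fin n)} (hf : fderiv ℝ f =ᶠ[𝓝 x] 0) : lap f x = 0 := by
  have hcoord : ∀ e, (fun y => fderiv ℝ f y e) =ᶠ[𝓝 x] fun _ => 0 :=
    fun e => hf.mono fun y hy => by simp [hy]
  simp [lap, (hcoord _).fderiv_eq]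

theorem integrableOn_mul_lap_of_integral_eq {D : Set (EuclideanSpace ℝ (Fin n))} (hD : IsOpen D)
    {f : EuclideanSpace ℝ (Fin n) → ℝ} (hf : ContDiffOn ℝ 1 f D)
    (hgrad : IntegrableOn (fun x => ‖gradient f x‖ ^ 2) D)
    (hibp : ∫ x in D, f x * lap f x = -∫ x in D, ‖gradient f x‖ ^ 2) :
    IntegrableOn (fun x => f x * lap f x) D := by
  -- Otherwise the left side of `hibp` is the junk value `0`, so `∇f = 0` and hence `Δf = 0` on `D`.
  by_contra hint
  rw [integral_undef hint, zero_eq_neg] at hibp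
  have hzero : EqOn (fun x => ‖gradient f x‖ ^ 2) 0 D :=
    Measure.eqOn_open_of_ae_eq ((integral_eq_zero_iff_of_nonneg_ae
      (ae_of_all _ fun _ => by positivity) hgrad).1 hibp) hD
      ((hf.continuousOn_gradient hD).norm.pow 2) continuousOn_const
  have hfderiv : ∀ x ∈ D, fderiv ℝ f x = 0 := fun x hx => by
    have hgrad0 : gradient f x = 0 := by simpa using hzero hx
    rw [← toDual_gradient, hgrad0, map_zero]
  refine hint (integrableOn_zero.congr_fun (fun x hx => ?_) hD.measurableSet)
  simp [lap_eq_zero_of_fderiv_eventuallyEq_zero (eventually_of_mem (hD.mem_nhds hx) hfderiv)]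

end Laplacian

section Solutions

variable {n : ℕ} {D : Set (EuclideanSpace ℝ (Fin n))} {a g g' : EuclideanSpace ℝ (Fin n) → ℝ}
  {p M C t : ℝ} {u v : ℝ → EuclideanSpace ℝ (Fin n) → ℝ}

theorem IsClassicalSolution.integrableOn_reaction (hu : IsClassicalSolution D a p g u)
    (hD : IsOpen D) (hDfin : volume D ≠ ⊤) (ha : ∀ x ∈ D, 0 ≤ a x ∧ a x ≤ M) (hp : 0 ≤ p)
    (ht : 0 ≤ t) (hbd : ∀ x ∈ D, u t x ≤ C) :
    IntegrableOn (fun x => a x * ((u t x) ^ (p + 1) - (u t x) ^ 2)) D := by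
  have hgrad : ContinuousOn (fun x => ‖gradient (u t) x‖ ^ 2) D :=
    (((hu.space_reg t ht).of_le (by norm_num)).continuousOn_gradient hD).norm.pow 2
  -- `a` is not assumed measurable: measurability is inherited from `lam_integrable`.
  refine ⟨((hu.lam_integrable t ht).aestronglyMeasurable.sub
    (hgrad.aestronglyMeasurable hD.measurableSet)).congr (ae_of_all _ fun x => by simp),
    .restrict_of_bounded (M * ((p + 1) * C ^ p + 2 * C) * C) hDfin.lt_top
      (ae_restrict_of_forall_mem hD.measurableSet fun x hx => ?_)⟩
  have hux : u t x ∈ Icc 0 C := ⟨hu.nonneg t ht x hx, hbd x hx⟩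
  have hM : 0 ≤ M := (ha x hx).1.trans (ha x hx).2
  have hC : 0 ≤ C := hux.1.trans hux.2
  have hlip := abs_reaction_sub_reaction_le (ha x hx) hp hux ⟨le_rfl, hC⟩
  rw [Real.zero_rpow (by linarith), sub_zero, abs_of_nonneg hux.1] at hlip
  simpa using hlip.trans (by gcongr; exact hux.2)

theorem IsClassicalSolution.integrableOn_sq_norm_gradient (hu : IsClassicalSolution D a p g u)
    (hD : IsOpen D) (hDfin : volume D ≠ ⊤) (ha : ∀ x ∈ D, 0 ≤ a x ∧ a x ≤ M) (hp : 0 ≤ p)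
    (ht : 0 ≤ t) (hbd : ∀ x ∈ D, u t x ≤ C) :
    IntegrableOn (fun x => ‖gradient (u t) x‖ ^ 2) D :=
  ((hu.lam_integrable t ht).sub (hu.integrableOn_reaction hD hDfin ha hp ht hbd)).congr_fun
    (fun x _ => by simp) hD.measurableSet

theorem IsClassicalSolution.lam_eq_add (hu : IsClassicalSolution D a p g u) (hD : IsOpen D)
    (hDfin : volume D ≠ ⊤) (ha : ∀ x ∈ D, 0 ≤ a x ∧ a x ≤ M) (hp : 0 ≤ p) (ht : 0 ≤ t)
    (hbd : ∀ x ∈ D, u t x ≤ C) :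
    lam D a p u t = (∫ x in D, ‖gradient (u t) x‖ ^ 2) +
      ∫ x in D, a x * ((u t x) ^ (p + 1) - (u t x) ^ 2) :=
  integral_add (hu.integrableOn_sq_norm_gradient hD hDfin ha hp ht hbd)
    (hu.integrableOn_reaction hD hDfin ha hp ht hbd)

theorem integrableOn_abs_sub (hu : IsClassicalSolution D a p g u)
    (hv : IsClassicalSolution D a p g' v) (hD : IsOpen D) (hDfin : volume D ≠ ⊤) (ht : 0 ≤ t)
    (hu_bd : ∀ x ∈ D, u t x ≤ C) (hv_bd : ∀ x ∈ D, v t x ≤ C) :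
    IntegrableOn (fun x => |u t x - v t x|) D :=
  ((hu.space_reg t ht).continuousOn.sub (hv.space_reg t ht).continuousOn).abs
    |>.integrableOn_of_abs_le hD.measurableSet hDfin fun x hx => by
      rw [abs_abs]
      exact abs_sub_le_of_nonneg_of_le (hu.nonneg t ht x hx) (hu_bd x hx) (hv.nonneg t ht x hx)
        (hv_bd x hx)

theorem integrableOn_sq_sub (hu : IsClassicalSolution D a p g u)
    (hv : IsClassicalSolution D a p g' v) (hD : IsOpen D) (hDfin : volume D ≠ ⊤) (ht : 0 ≤ t)
    (hu_bd : ∀ x ∈ D, u t x ≤ C) (hv_bd : ∀ x ∈ D, v t x ≤ C) :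
    IntegrableOn (fun x => (u t x - v t x) ^ 2) D :=
  (((hu.space_reg t ht).continuousOn.sub (hv.space_reg t ht).continuousOn).pow 2)
    |>.integrableOn_of_abs_le hD.measurableSet hDfin (c := C ^ 2) fun x hx => by
      show |(u t x - v t x) ^ 2| ≤ C ^ 2
      rw [abs_pow]
      exact pow_le_pow_left₀ (abs_nonneg _) (abs_sub_le_of_nonneg_of_le (hu.nonneg t ht x hx)
        (hu_bd x hx) (hv.nonneg t ht x hx) (hv_bd x hx)) 2

theorem integrableOn_sub_mul (hu : IsClassicalSolution D a p g u)
    (hv : IsClassicalSolution D a p g' v) (hD : IsOpen D) (hDfin : volume D ≠ ⊤) (ht : 0 ≤ t)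
    (hu_bd : ∀ x ∈ D, u t x ≤ C) (hv_bd : ∀ x ∈ D, v t x ≤ C) :
    IntegrableOn (fun x => (u t x - v t x) * u t x) D :=
  (((hu.space_reg t ht).continuousOn.sub (hv.space_reg t ht).continuousOn).mul
    (hu.space_reg t ht).continuousOn)
    |>.integrableOn_of_abs_le hD.measurableSet hDfin (c := C * C) fun x hx => by
      show |(u t x - v t x) * u t x| ≤ C * C
      rw [abs_mul, abs_of_nonneg (hu.nonneg t ht x hx)]
      exact mul_le_mul (abs_sub_le_of_nonneg_of_le (hu.nonneg t ht x hx) (hu_bd x hx)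
        (hv.nonneg t ht x hx) (hv_bd x hx)) (hu_bd x hx) (hu.nonneg t ht x hx)
        ((hu.nonneg t ht x hx).trans (hu_bd x hx))

theorem integrableOn_sub_mul_lap_sub (hu : IsClassicalSolution D a p g u)
    (hv : IsClassicalSolution D a p g' v) (hD : IsOpen D) (hDfin : volume D ≠ ⊤)
    (ha : ∀ x ∈ D, 0 ≤ a x ∧ a x ≤ M) (hp : 0 ≤ p) (ht : 0 ≤ t)
    (hu_bd : ∀ x ∈ D, u t x ≤ C) (hv_bd : ∀ x ∈ D, v t x ≤ C)
    (hibp : ∫ x in D, (u t x - v t x) * lap (fun y => u t y - v t y) x =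
      -∫ x in D, ‖gradient (fun y => u t y - v t y) x‖ ^ 2) :
    IntegrableOn (fun x => (u t x - v t x) * lap (fun y => u t y - v t y) x) D := by
  have hU := (hu.space_reg t ht).of_le (m := 1) (by norm_num)
  have hV := (hv.space_reg t ht).of_le (m := 1) (by norm_num)
  exact integrableOn_mul_lap_of_integral_eq hD (hU.sub hV)
    ((hU.memLp_gradient_sub hV hD
      (hu.integrableOn_sq_norm_gradient hD hDfin ha hp ht hu_bd)
      (hv.integrableOn_sq_norm_gradient hD hDfin ha hp ht hv_bd)).integrable_norm_pow two_ne_zero)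
    hibp

theorem abs_lam_sub_lam_le (hu : IsClassicalSolution D a p g u)
    (hv : IsClassicalSolution D a p g' v) (hD : IsOpen D) (hDfin : volume D ≠ ⊤)
    (ha : ∀ x ∈ D, 0 ≤ a x ∧ a x ≤ M) (hp : 0 ≤ p) (hC : 0 ≤ C) (ht : 0 ≤ t)
    (hu_bd : ∀ x ∈ D, u t x ≤ C) (hv_bd : ∀ x ∈ D, v t x ≤ C)
    (hu_h1 : ∫ x in D, ‖gradient (u t) x‖ ^ 2 ≤ C ^ 2)
    (hv_h1 : ∫ x in D, ‖gradient (v t) x‖ ^ 2 ≤ C ^ 2) :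
    |lam D a p u t - lam D a p v t| ≤
      2 * C * √(∫ x in D, ‖gradient (fun y => u t y - v t y) x‖ ^ 2) +
        M * ((p + 1) * C ^ p + 2 * C) * ∫ x in D, |u t x - v t x| := by
  have hux : ∀ x ∈ D, u t x ∈ Icc 0 C := fun x hx => ⟨hu.nonneg t ht x hx, hu_bd x hx⟩
  have hvx : ∀ x ∈ D, v t x ∈ Icc 0 C := fun x hx => ⟨hv.nonneg t ht x hx, hv_bd x hx⟩
  have hreaction : |(∫ x in D, a x * ((u t x) ^ (p + 1) - (u t x) ^ 2)) -
      ∫ x in D, a x * ((v t x) ^ (p + 1) - (v t x) ^ 2)| ≤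
        M * ((p + 1) * C ^ p + 2 * C) * ∫ x in D, |u t x - v t x| := by
    rw [← integral_sub (hu.integrableOn_reaction hD hDfin ha hp ht hu_bd)
      (hv.integrableOn_reaction hD hDfin ha hp ht hv_bd), ← integral_const_mul]
    exact norm_integral_le_of_norm_le (f := fun x => a x * ((u t x) ^ (p + 1) - (u t x) ^ 2) -
        a x * ((v t x) ^ (p + 1) - (v t x) ^ 2))
      ((integrableOn_abs_sub hu hv hD hDfin ht hu_bd hv_bd).const_mul _) (ae_restrict_of_forall_mem
      hD.measurableSet fun x hx => abs_reaction_sub_reaction_le (ha x hx) hp (hux x hx) (hvx x hx))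
  have hgradient := abs_setIntegral_sq_norm_gradient_sub_le hD
    ((hu.space_reg t ht).of_le (by norm_num)) ((hv.space_reg t ht).of_le (by norm_num))
    (hu.integrableOn_sq_norm_gradient hD hDfin ha hp ht hu_bd)
    (hv.integrableOn_sq_norm_gradient hD hDfin ha hp ht hv_bd)
  have hsqrt : √(∫ x in D, ‖gradient (u t) x‖ ^ 2) + √(∫ x in D, ‖gradient (v t) x‖ ^ 2) ≤
      2 * C := by
    have hu' := Real.sqrt_le_sqrt hu_h1
    have hv' := Real.sqrt_le_sqrt hv_h1
    rw [Real.sqrt_sq hC] at hu' hv'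
    linarith
  rw [hu.lam_eq_add hD hDfin ha hp ht hu_bd, hv.lam_eq_add hD hDfin ha hp ht hv_bd,
    add_sub_add_comm]
  exact (abs_add_le _ _).trans (add_le_add
    (hgradient.trans (mul_le_mul_of_nonneg_right hsqrt (Real.sqrt_nonneg _))) hreaction)

theorem lam_sub_lam_mul_integral_le (hu : IsClassicalSolution D a p g u)
    (hv : IsClassicalSolution D a p g' v) (hD : IsOpen D) (hDfin : volume D ≠ ⊤)
    (ha : ∀ x ∈ D, 0 ≤ a x ∧ a x ≤ M) (hM : 0 ≤ M) (hp : 0 ≤ p) (hC : 0 ≤ C) (ht : 0 ≤ t)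
    (hu_bd : ∀ x ∈ D, u t x ≤ C) (hv_bd : ∀ x ∈ D, v t x ≤ C)
    (hu_h1 : ∫ x in D, ‖gradient (u t) x‖ ^ 2 ≤ C ^ 2)
    (hv_h1 : ∫ x in D, ‖gradient (v t) x‖ ^ 2 ≤ C ^ 2) :
    (lam D a p u t - lam D a p v t) * ∫ x in D, (u t x - v t x) * u t x ≤
      (∫ x in D, ‖gradient (fun y => u t y - v t y) x‖ ^ 2) +
        (C ^ 4 + C * (M * ((p + 1) * C ^ p + 2 * C))) * volume.real D *
          ∫ x in D, (u t x - v t x) ^ 2 := by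
  set N := ∫ x in D, ‖gradient (fun y => u t y - v t y) x‖ ^ 2
  set W := ∫ x in D, (u t x - v t x) ^ 2
  set B := ∫ x in D, |u t x - v t x|
  have hB : B ^ 2 ≤ volume.real D * W := by
    have hCS := setIntegral_abs_le_sqrt_mul_sqrt hDfin ((memLp_two_iff_integrable_sq
      (((hu.space_reg t ht).continuousOn.sub (hv.space_reg t ht).continuousOn).aestronglyMeasurable
        hD.measurableSet)).2 (integrableOn_sq_sub hu hv hD hDfin ht hu_bd hv_bd))
    calc B ^ 2 ≤ (√(volume.real D) * √W) ^ 2 :=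
          pow_le_pow_left₀ (integral_nonneg fun _ => abs_nonneg _) hCS 2
      _ = volume.real D * W := by
          rw [mul_pow, Real.sq_sqrt measureReal_nonneg,
            Real.sq_sqrt (integral_nonneg fun _ => sq_nonneg _)]
  have hX : |∫ x in D, (u t x - v t x) * u t x| ≤ C * B := by
    rw [← integral_const_mul]
    refine norm_integral_le_of_norm_le (f := fun x => (u t x - v t x) * u t x)
      ((integrableOn_abs_sub hu hv hD hDfin ht hu_bd hv_bd).const_mul C)
      (ae_restrict_of_forall_mem hD.measurableSet fun x hx => ?_)
    rw [Real.norm_eq_abs, abs_mul, abs_of_nonneg (hu.nonneg t ht x hx), mul_comm]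
    exact mul_le_mul_of_nonneg_right (hu_bd x hx) (abs_nonneg _)
  have hG := abs_lam_sub_lam_le hu hv hD hDfin ha hp hC ht hu_bd hv_bd hu_h1 hv_h1
  have hN : √N ^ 2 = N := Real.sq_sqrt (integral_nonneg fun _ => sq_nonneg _)
  calc (lam D a p u t - lam D a p v t) * ∫ x in D, (u t x - v t x) * u t x
      ≤ |lam D a p u t - lam D a p v t| * |∫ x in D, (u t x - v t x) * u t x| :=
        (le_abs_self _).trans (abs_mul _ _).le
    _ ≤ (2 * C * √N + M * ((p + 1) * C ^ p + 2 * C) * B) * (C * B) :=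
        mul_le_mul hG hX (abs_nonneg _) (by positivity)
    _ ≤ N + (C ^ 4 + C * (M * ((p + 1) * C ^ p + 2 * C))) * B ^ 2 := by
        -- Young: `2 C² B √N ≤ N + C⁴ B²`
        nlinarith [sq_nonneg (√N - C ^ 2 * B)]
    _ ≤ N + (C ^ 4 + C * (M * ((p + 1) * C ^ p + 2 * C))) * (volume.real D * W) := by
        gcongr
    _ = _ := by ring

theorem mul_sub_deriv_le (hu : IsClassicalSolution D a p g u)
    (hv : IsClassicalSolution D a p g' v) (hD : IsOpen D) (ha : ∀ x ∈ D, 0 ≤ a x ∧ a x ≤ M)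
    (hp : 0 ≤ p) (ht : 0 ≤ t) {x : EuclideanSpace ℝ (Fin n)} (hx : x ∈ D) :
    (u t x - v t x) * (deriv (fun s => u s x) t - deriv (fun s => v s x) t) ≤
      (u t x - v t x) * lap (fun y => u t y - v t y) x +
        (lam D a p v t + M) * (u t x - v t x) ^ 2 +
          (lam D a p u t - lam D a p v t) * ((u t x - v t x) * u t x) := by
  rw [hu.pde t ht x hx, hv.pde t ht x hx, lap_fun_sub
    ((hu.space_reg t ht).contDiffAt (hD.mem_nhds hx))
    ((hv.space_reg t ht).contDiffAt (hD.mem_nhds hx))]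
  have hmono := sub_mul_rpow_sub_rpow_nonneg hp (hu.nonneg t ht x hx) (hv.nonneg t ht x hx)
  nlinarith [mul_nonneg (sub_nonneg.2 (ha x hx).2) (sq_nonneg (u t x - v t x)),
    mul_nonneg (ha x hx).1 hmono]

theorem integral_mul_sub_deriv_le (hu : IsClassicalSolution D a p g u)
    (hv : IsClassicalSolution D a p g' v) (hD : IsOpen D) (hDfin : volume D ≠ ⊤)
    (ha : ∀ x ∈ D, 0 ≤ a x ∧ a x ≤ M) (hM : 0 ≤ M) (hp : 0 ≤ p) (hC : 0 ≤ C) (ht : 0 ≤ t)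
    (hu_bd : ∀ x ∈ D, u t x ≤ C) (hv_bd : ∀ x ∈ D, v t x ≤ C)
    (hu_h1 : ∫ x in D, ‖gradient (u t) x‖ ^ 2 ≤ C ^ 2)
    (hv_h1 : ∫ x in D, ‖gradient (v t) x‖ ^ 2 ≤ C ^ 2) (hlam_v : lam D a p v t ≤ C)
    (hibp : ∫ x in D, (u t x - v t x) * lap (fun y => u t y - v t y) x =
      -∫ x in D, ‖gradient (fun y => u t y - v t y) x‖ ^ 2) :
    ∫ x in D, (u t x - v t x) * (deriv (fun s => u s x) t - deriv (fun s => v s x) t) ≤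
      (C + M + (C ^ 4 + C * (M * ((p + 1) * C ^ p + 2 * C))) * volume.real D) *
        ∫ x in D, (u t x - v t x) ^ 2 := by
  have hW : 0 ≤ ∫ x in D, (u t x - v t x) ^ 2 := integral_nonneg fun _ => sq_nonneg _
  by_cases hint : IntegrableOn
    (fun x => (u t x - v t x) * (deriv (fun s => u s x) t - deriv (fun s => v s x) t)) D
  swap
  · rw [integral_undef hint]
    positivity
  have hw2 := integrableOn_sq_sub hu hv hD hDfin ht hu_bd hv_bd
  have hwU := integrableOn_sub_mul hu hv hD hDfin ht hu_bd hv_bd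
  have hwlap := integrableOn_sub_mul_lap_sub hu hv hD hDfin ha hp ht hu_bd hv_bd hibp
  have hlocal : IntegrableOn (fun x => (u t x - v t x) * lap (fun y => u t y - v t y) x +
      (lam D a p v t + M) * (u t x - v t x) ^ 2) D :=
    hwlap.add (hw2.const_mul _)
  calc ∫ x in D, (u t x - v t x) * (deriv (fun s => u s x) t - deriv (fun s => v s x) t)
      ≤ ∫ x in D, ((u t x - v t x) * lap (fun y => u t y - v t y) x +
          (lam D a p v t + M) * (u t x - v t x) ^ 2 +
            (lam D a p u t - lam D a p v t) * ((u t x - v t x) * u t x)) :=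
        setIntegral_mono_on hint (hlocal.add (hwU.const_mul _))
          hD.measurableSet fun x hx => mul_sub_deriv_le hu hv hD ha hp ht hx
    _ = -(∫ x in D, ‖gradient (fun y => u t y - v t y) x‖ ^ 2) +
          (lam D a p v t + M) * (∫ x in D, (u t x - v t x) ^ 2) +
            (lam D a p u t - lam D a p v t) * ∫ x in D, (u t x - v t x) * u t x := by
        rw [integral_add hlocal (hwU.const_mul _),
          integral_add hwlap (hw2.const_mul _), integral_const_mul, integral_const_mul, hibp]
    _ ≤ _ := by
        have hnonlocal := lam_sub_lam_mul_integral_le hu hv hD hDfin ha hM hp hC ht hu_bd hv_bd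
          hu_h1 hv_h1
        have hlinear := mul_le_mul_of_nonneg_right (add_le_add_right hlam_v M) hW
        linarith

end Solutions

theorem le_mul_exp_of_hasDerivAt_le {f f' : ℝ → ℝ} {K : ℝ}
    (hf : ∀ t, 0 ≤ t → HasDerivAt f (f' t) t) (hbound : ∀ t, 0 ≤ t → f' t ≤ K * f t)
    {t : ℝ} (ht : 0 ≤ t) : f t ≤ f 0 * Real.exp (K * t) := by
  simpa [gronwallBound_ε0] using le_gronwallBound_of_liminf_deriv_right_le (ε := 0)
    (fun s hs => (hf s hs.1).continuousAt.continuousWithinAt)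
    (fun s hs _ hr => (hf s hs.1).hasDerivWithinAt.liminf_right_slope_le hr) le_rfl
    (fun s hs => by simpa using hbound s hs.1) t ⟨ht, le_rfl⟩

theorem l2_stability_general {n : ℕ}
    (D : Set (EuclideanSpace ℝ (Fin n))) (hD_open : IsOpen D)
    (hD_bdd : Bornology.IsBounded D)
    (M p : ℝ) (hM : 0 < M) (hp : 1 < p)
    (a gu gv : EuclideanSpace ℝ (Fin n) → ℝ)
    (ha : ∀ x ∈ D, 0 ≤ a x ∧ a x ≤ M)
    (u v : ℝ → EuclideanSpace ℝ (Fin n) → ℝ)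
    (hu : IsClassicalSolution D a p gu u) (hv : IsClassicalSolution D a p gv v)
    (C : ℝ) (hC : 0 < C)
    (hu_bd : ∀ t, 0 ≤ t → ∀ x ∈ D, u t x ≤ C)
    (hv_bd : ∀ t, 0 ≤ t → ∀ x ∈ D, v t x ≤ C)
    (hu_h1 : ∀ t, 0 ≤ t → (∫ x in D, ‖gradient (u t) x‖ ^ 2) ≤ C ^ 2)
    (hv_h1 : ∀ t, 0 ≤ t → (∫ x in D, ‖gradient (v t) x‖ ^ 2) ≤ C ^ 2)
    (hlam_v : ∀ t, 0 ≤ t → lam D a p v t ≤ C)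
    -- differentiation under the integral sign for `w = u − v`
    (hw_deriv : ∀ t, 0 ≤ t → HasDerivAt (fun s => ∫ x in D, (u s x - v s x) ^ 2)
      (2 * ∫ x in D, (u t x - v t x) *
        (deriv (fun s => u s x) t - deriv (fun s => v s x) t)) t)
    -- integration by parts: `∫_D w Δw = −∫_D |∇w|²`
    (hw_ibp : ∀ t, 0 ≤ t →
      (∫ x in D, (u t x - v t x) * lap (fun y => u t y - v t y) x)
        = -∫ x in D, ‖gradient (fun y => u t y - v t y) x‖ ^ 2) :
    ∃ C₁, 0 ≤ C₁ ∧ ∀ t, 0 ≤ t →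
      (∫ x in D, (u t x - v t x) ^ 2) ≤
        (∫ x in D, (gu x - gv x) ^ 2) * Real.exp (C₁ * t) := by
  set K := C + M + (C ^ 4 + C * (M * ((p + 1) * C ^ p + 2 * C))) * volume.real D
  have hp₀ : 0 ≤ p := by linarith
  refine ⟨2 * K, by positivity, fun t ht => ?_⟩
  have hinit : ∫ x in D, (u 0 x - v 0 x) ^ 2 = ∫ x in D, (gu x - gv x) ^ 2 :=
    setIntegral_congr_fun hD_open.measurableSet fun x hx => by
      simp only [hu.init x hx, hv.init x hx]
  rw [← hinit]
  refine le_mul_exp_of_hasDerivAt_le hw_deriv (fun s hs => ?_) ht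
  have hs_energy := integral_mul_sub_deriv_le hu hv hD_open hD_bdd.measure_lt_top.ne ha hM.le
    hp₀ hC.le hs (hu_bd s hs) (hv_bd s hs) (hu_h1 s hs) (hv_h1 s hs) (hlam_v s hs) (hw_ibp s hs)
  linarith

/-- L² stability, Theorem 1.3 of the paper. -/
theorem l2_stability {n : ℕ} (hn : 1 ≤ n)
    (D : Set (EuclideanSpace ℝ (Fin n))) (hD_open : IsOpen D)
    (hD_bdd : Bornology.IsBounded D)
    (M p : ℝ) (hM : 0 < M) (hp : 1 < p)
    (a gu gv : EuclideanSpace ℝ (Fin n) → ℝ)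
    (ha : ∀ x ∈ D, 0 ≤ a x ∧ a x ≤ M) (ha' : ∀ x ∈ D, ‖gradient a x‖ ≤ M)
    (u v : ℝ → EuclideanSpace ℝ (Fin n) → ℝ)
    (hu : IsClassicalSolution D a p gu u) (hv : IsClassicalSolution D a p gv v)
    (C : ℝ) (hC : 0 < C)
    (hu_bd : ∀ t, 0 ≤ t → ∀ x ∈ D, u t x ≤ C)
    (hv_bd : ∀ t, 0 ≤ t → ∀ x ∈ D, v t x ≤ C)
    (hu_l2 : ∀ t, 0 ≤ t → (∫ x in D, (u t x) ^ 2) ≤ C ^ 2)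
    (hu_h1 : ∀ t, 0 ≤ t → (∫ x in D, ‖gradient (u t) x‖ ^ 2) ≤ C ^ 2)
    (hv_h1 : ∀ t, 0 ≤ t → (∫ x in D, ‖gradient (v t) x‖ ^ 2) ≤ C ^ 2)
    (hlam_v : ∀ t, 0 ≤ t → lam D a p v t ≤ C)
    -- differentiation under the integral sign for `w = u − v`
    (hw_deriv : ∀ t, 0 ≤ t → HasDerivAt (fun s => ∫ x in D, (u s x - v s x) ^ 2)
      (2 * ∫ x in D, (u t x - v t x) *
        (deriv (fun s => u s x) t - deriv (fun s => v s x) t)) t)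
    -- integration by parts: `∫_D w Δw = −∫_D |∇w|²`
    (hw_ibp : ∀ t, 0 ≤ t →
      (∫ x in D, (u t x - v t x) * lap (fun y => u t y - v t y) x)
        = -∫ x in D, ‖gradient (fun y => u t y - v t y) x‖ ^ 2) :
    ∃ C₁, 0 ≤ C₁ ∧ ∀ t, 0 ≤ t →
      (∫ x in D, (u t x - v t x) ^ 2) ≤
        (∫ x in D, (gu x - gv x) ^ 2) * Real.exp (C₁ * t) :=
  l2_stability_general D hD_open hD_bdd M p hM hp a gu gv ha u v hu hv C hC hu_bd hv_bd hu_h1 hv_h1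
    hlam_v hw_deriv hw_ibp
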